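/- arXiv:2205.04381 — 6 statements merged into one kernel-verified Lean document; each statement's English description precedes it below -/
import Mathlib

section
/- If (g, [.,.], ▷) is a post-Lie algebra, then defining x ▶ y := x▷y + [x,y], the triple (g, −[.,.], ▶) is again a post-Lie algebra, i.e., x ▶ (−[y,z]) = −[x▶y, z] − [y, x▶z] and −[x,y] ▶ z = a_▶(x,y,z) − a_▶(y,x,z). -/
/-- A post-Lie algebra: a Lie algebra `(L, ⁅·,·⁆)` together with a bilinear product `▷`
(denoted `t`) satisfying the two post-Lie compatibility axioms. -/
structure PostLie (k : Type*) (L : Type*) [CommRing k] [LieRing L] [LieAlgebra k L] where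
  t : L →ₗ[k] L →ₗ[k] L
  ax1 : ∀ x y z : L, t x ⁅y, z⁆ = ⁅t x y, z⁆ + ⁅y, t x z⁆
  ax2 : ∀ x y z : L,
    t ⁅x, y⁆ z = (t x (t y z) - t (t x y) z) - (t y (t x z) - t (t y x) z)

/-- If `(g,[.,.],▷)` is post-Lie, then with `x ▶ y := x▷y + [x,y]`, the
triple `(g, −[.,.], ▶)` is again post-Lie:
`x ▶ (−[y,z]) = −[x▶y, z] − [y, x▶z]` and `(−[x,y]) ▶ z = a_▶(x,y,z) − a_▶(y,x,z)`. -/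
theorem postLie_opposite {k L : Type*} [CommRing k] [LieRing L] [LieAlgebra k L]
    (P : PostLie k L) (tr : L → L → L)
    (htr : ∀ x y, tr x y = P.t x y + ⁅x, y⁆) :
    (∀ x y z : L, tr x (-⁅y, z⁆) = -⁅tr x y, z⁆ - ⁅y, tr x z⁆) ∧
    (∀ x y z : L, tr (-⁅x, y⁆) z =
      (tr x (tr y z) - tr (tr x y) z) - (tr y (tr x z) - tr (tr y x) z)) := by
  constructor <;> intro x y z <;>
    simp only [htr, map_neg, map_add, map_sub, LinearMap.neg_apply, LinearMap.add_apply,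
      LinearMap.sub_apply, P.ax1, P.ax2, lie_add, add_lie, lie_neg, neg_lie, lie_lie,
      sub_lie, lie_sub] <;> abel
end

section
/- In a D-algebra (D, ·, ▷), the subset d(D) := {u ∈ D : u ▷ (v·w) = (u▷v)·w + v·(u▷w) for all v,w} is closed under the commutator bracket [u,v] := u·v − v·u, and (d(D), [.,.], ▷) is a post-Lie algebra. -/
/-- The derivation set `d(D)` of a unital algebra `D` with an extra product `▷`
(denoted `t`): those `u` such that `u ▷ -` is a derivation of the associative product. -/
def derivSet {k D : Type*} [CommRing k] [Ring D] [Algebra k D]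
    (t : D →ₗ[k] D →ₗ[k] D) : Set D :=
  {u : D | ∀ v w : D, t u (v * w) = t u v * w + v * t u w}

/-- A `D`-algebra: a unital associative algebra with a product `▷` such that `1 ▷ v = v`,
`D` is generated (as a unital algebra) by `d(D)`, elements of `d(D)` are stable under
`v ▷ -`, and `(x·v) ▷ w = x▷(v▷w) − (x▷v)▷w` for `x ∈ d(D)`. -/
structure DAlgebra (k D : Type*) [CommRing k] [Ring D] [Algebra k D] where
  t : D →ₗ[k] D →ₗ[k] D
  one_t : ∀ v : D, t 1 v = v
  generates : Algebra.adjoin k (derivSet t) = ⊤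
  stable : ∀ x ∈ derivSet t, ∀ v : D, t v x ∈ derivSet t
  axD : ∀ x ∈ derivSet t, ∀ v w : D, t (x * v) w = t x (t v w) - t (t x v) w

/-- In a D-algebra `(D,·,▷)`, the set `d(D)` is closed under the
commutator bracket `[u,v] = u·v − v·u`, and `(d(D), [.,.], ▷)` is a post-Lie algebra
(both post-Lie axioms hold on `d(D)`, with the commutator as Lie bracket). -/
theorem dAlgebra_derivSet_postLie {k D : Type*} [CommRing k] [Ring D] [Algebra k D]
    (A : DAlgebra k D) :
    (∀ u ∈ derivSet A.t, ∀ v ∈ derivSet A.t, u * v - v * u ∈ derivSet A.t) ∧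
    (∀ x ∈ derivSet A.t, ∀ y ∈ derivSet A.t, ∀ z ∈ derivSet A.t,
      A.t x (y * z - z * y) =
        ((A.t x y) * z - z * (A.t x y)) + (y * (A.t x z) - (A.t x z) * y)) ∧
    (∀ x ∈ derivSet A.t, ∀ y ∈ derivSet A.t, ∀ z : D,
      A.t (x * y - y * x) z =
        (A.t x (A.t y z) - A.t (A.t x y) z) - (A.t y (A.t x z) - A.t (A.t y x) z)) := by
  refine ⟨?_, ?_, ?_⟩
  · intro u hu v hv a b
    have h1 := A.axD u hu v
    have h2 := A.axD v hv u
    have huv : A.t u v ∈ derivSet A.t := A.stable v hv u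
    have hvu : A.t v u ∈ derivSet A.t := A.stable u hu v
    have e : A.t (u * v - v * u) (a * b) =
        A.t (u * v) (a * b) - A.t (v * u) (a * b) := by
      rw [map_sub]; simp
    rw [e, h1, h2, hv a b, map_add, hu _ b, hu a _, huv a b, hu a b, map_add,
      hv _ b, hv a _, hvu a b]
    have e2 : ∀ c : D, A.t (u * v - v * u) c = A.t (u * v) c - A.t (v * u) c := by
      intro c; rw [map_sub]; simp
    rw [e2, e2, h1 a, h2 a, h1 b, h2 b]
    noncomm_ring
  · intro x hx y hy z hz
    have e : A.t x (y * z - z * y) = A.t x (y * z) - A.t x (z * y) := map_sub _ _ _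
    rw [e, hx y z, hx z y]
    abel
  · intro x hx y hy z
    have e : A.t (x * y - y * x) z = A.t (x * y) z - A.t (y * x) z := by
      rw [map_sub]; simp
    rw [e, A.axD x hx y z, A.axD y hy x z]
end

section
/- In the tensor algebra T(M) over a magmatic algebra (M,▷) with the extended product ▷, the unshuffle coproduct is compatible with ▷: Δ(U▷V) = (U₍₁₎▷V₍₁₎) ⊗ (U₍₂₎▷V₍₂₎) for all U, V ∈ T(M). -/
open TensorProduct TensorAlgebra

variable (k M : Type*) [CommRing k] [AddCommGroup M] [Module k M]

/-- The linear map sending `x ∈ M` to the primitive element `ι x ⊗ 1 + 1 ⊗ ι x`. -/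
noncomputable def primMap : M →ₗ[k] TensorAlgebra k M ⊗[k] TensorAlgebra k M :=
  ((TensorProduct.mk k (TensorAlgebra k M) (TensorAlgebra k M)).flip 1).comp (ι k) +
    (TensorProduct.mk k (TensorAlgebra k M) (TensorAlgebra k M) 1).comp (ι k)

/-- The unshuffle coproduct on the tensor algebra: the unique algebra morphism
`Δ : T(M) → T(M) ⊗ T(M)` for which every element of `M` is primitive. -/
noncomputable def unshuffle :
    TensorAlgebra k M →ₐ[k] TensorAlgebra k M ⊗[k] TensorAlgebra k M :=
  TensorAlgebra.lift k (primMap k M)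

/-- The counit of the tensor algebra: the algebra morphism killing `M`. -/
noncomputable def counit : TensorAlgebra k M →ₐ[k] k :=
  TensorAlgebra.lift k (0 : M →ₗ[k] k)

section Aux

variable {k M}

lemma unshuffle_ι (x : M) :
    unshuffle k M (ι k x) = ι k x ⊗ₜ[k] 1 + 1 ⊗ₜ[k] ι k x := by
  simp [unshuffle, primMap, TensorAlgebra.lift_ι_apply]

lemma counit_ι (x : M) : counit k M (ι k x) = 0 := by
  simp [counit, TensorAlgebra.lift_ι_apply]

variable (t : TensorAlgebra k M →ₗ[k] TensorAlgebra k M →ₗ[k] TensorAlgebra k M)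

/-- The primitive element `ι x ⊗ 1 + 1 ⊗ ι x` (abbreviation). -/
noncomputable def pr (x : M) : TensorAlgebra k M ⊗[k] TensorAlgebra k M :=
  ι k x ⊗ₜ[k] 1 + 1 ⊗ₜ[k] ι k x

lemma map₂_one (hone : ∀ W, t 1 W = W)
    (z : TensorAlgebra k M ⊗[k] TensorAlgebra k M) :
    TensorProduct.map₂ t t ((1 : TensorAlgebra k M) ⊗ₜ[k] 1) z = z := by
  induction z using TensorProduct.induction_on with
  | zero => simp
  | tmul c d => simp [TensorProduct.map₂_apply_tmul, hone]
  | add a b ha hb => rw [map_add, ha, hb]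

lemma map₂_leib (hone : ∀ W, t 1 W = W)
    (hleib : ∀ (x : M) (V W : TensorAlgebra k M),
      t (ι k x) (V * W) = t (ι k x) V * W + V * t (ι k x) W)
    (x : M) (A B : TensorAlgebra k M ⊗[k] TensorAlgebra k M) :
    TensorProduct.map₂ t t (pr x) (A * B) =
      TensorProduct.map₂ t t (pr x) A * B + A * TensorProduct.map₂ t t (pr x) B := by
  induction A using TensorProduct.induction_on with
  | zero => simp
  | add a b ha hb => simp only [add_mul, map_add, ha, hb]; abel
  | tmul a b =>
    induction B using TensorProduct.induction_on with
    | zero => simp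
    | add c d hc hd => simp only [mul_add, map_add, hc, hd]; abel
    | tmul c d =>
      simp only [pr, map_add, Algebra.TensorProduct.tmul_mul_tmul,
        TensorProduct.map₂_apply_tmul, TensorProduct.map_tmul, hone, hleib,
        LinearMap.add_apply, TensorProduct.add_tmul, TensorProduct.tmul_add,
        add_mul, mul_add]
      abel

lemma map₂_assoc (hone : ∀ W, t 1 W = W)
    (hassoc : ∀ (x : M) (V W : TensorAlgebra k M),
      t (ι k x * V) W = t (ι k x) (t V W) - t (t (ι k x) V) W)
    (x : M) (A B : TensorAlgebra k M ⊗[k] TensorAlgebra k M) :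
    TensorProduct.map₂ t t (pr x * A) B =
      TensorProduct.map₂ t t (pr x) (TensorProduct.map₂ t t A B) -
        TensorProduct.map₂ t t (TensorProduct.map₂ t t (pr x) A) B := by
  induction A using TensorProduct.induction_on with
  | zero => simp
  | add a b ha hb => simp only [mul_add, map_add, LinearMap.add_apply, ha, hb]; abel
  | tmul a b =>
    induction B using TensorProduct.induction_on with
    | zero => simp
    | add c d hc hd => simp only [map_add, hc, hd]; abel
    | tmul c d =>
      simp only [pr, add_mul, map_add, Algebra.TensorProduct.tmul_mul_tmul,
        TensorProduct.map₂_apply_tmul, TensorProduct.map_tmul, hone, hassoc,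
        one_mul, mul_one, LinearMap.add_apply, map_sub, LinearMap.sub_apply,
        TensorProduct.add_tmul, TensorProduct.tmul_add, TensorProduct.sub_tmul,
        TensorProduct.tmul_sub]
      abel

lemma t_prim_one (hcounit : ∀ U, t U 1 = algebraMap k (TensorAlgebra k M) (counit k M U))
    (x : M) : t (ι k x) 1 = 0 := by
  rw [hcounit, counit_ι, map_zero]

lemma compat_prim (hone : ∀ W, t 1 W = W)
    (hcounit : ∀ U, t U 1 = algebraMap k (TensorAlgebra k M) (counit k M U))
    (hbase : ∀ x y : M, ∃ z, t (ι k x) (ι k y) = ι k z)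
    (hleib : ∀ (x : M) (V W : TensorAlgebra k M),
      t (ι k x) (V * W) = t (ι k x) V * W + V * t (ι k x) W)
    (x : M) (V : TensorAlgebra k M) :
    unshuffle k M (t (ι k x) V) = TensorProduct.map₂ t t (pr x) (unshuffle k M V) := by
  induction V using TensorAlgebra.induction with
  | algebraMap r =>
    have h1 : t (ι k x) (algebraMap k (TensorAlgebra k M) r) = 0 := by
      rw [Algebra.algebraMap_eq_smul_one, map_smul, t_prim_one t hcounit, smul_zero]
    rw [h1, map_zero, AlgHom.commutes, Algebra.algebraMap_eq_smul_one, map_smul]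
    simp [Algebra.TensorProduct.one_def, pr, TensorProduct.map₂_apply_tmul,
      t_prim_one t hcounit]
  | ι y =>
    obtain ⟨z, hz⟩ := hbase x y
    rw [hz, unshuffle_ι, unshuffle_ι]
    simp [pr, TensorProduct.map₂_apply_tmul, t_prim_one t hcounit, hone, hz]
  | mul a b ha hb =>
    rw [hleib]
    simp only [map_add, map_mul]
    rw [ha, hb, map₂_leib t hone hleib]
  | add a b ha hb =>
    simp only [map_add, ha, hb]

/-- The compatibility predicate. -/
def Compat (U : TensorAlgebra k M) : Prop :=
  ∀ V, unshuffle k M (t U V) =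
    TensorProduct.map₂ t t (unshuffle k M U) (unshuffle k M V)

lemma compat_zero : Compat t 0 := by
  intro V
  simp [Compat, map_zero, LinearMap.zero_apply]

lemma compat_add {A B : TensorAlgebra k M} (hA : Compat t A) (hB : Compat t B) :
    Compat t (A + B) := by
  intro V
  simp only [map_add, LinearMap.add_apply, hA V, hB V]

lemma compat_smul (r : k) {A : TensorAlgebra k M} (hA : Compat t A) :
    Compat t (r • A) := by
  intro V
  simp only [map_smul, LinearMap.smul_apply, hA V]

lemma compat_one (hone : ∀ W, t 1 W = W) : Compat t 1 := by
  intro V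
  rw [hone, map_one, Algebra.TensorProduct.one_def, map₂_one t hone]

lemma compat_prim_mul (hone : ∀ W, t 1 W = W)
    (hcounit : ∀ U, t U 1 = algebraMap k (TensorAlgebra k M) (counit k M U))
    (hbase : ∀ x y : M, ∃ z, t (ι k x) (ι k y) = ι k z)
    (hleib : ∀ (x : M) (V W : TensorAlgebra k M),
      t (ι k x) (V * W) = t (ι k x) V * W + V * t (ι k x) W)
    (hassoc : ∀ (x : M) (V W : TensorAlgebra k M),
      t (ι k x * V) W = t (ι k x) (t V W) - t (t (ι k x) V) W)
    (x : M) {U : TensorAlgebra k M}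
    (hU : Compat t U) (hU' : Compat t (t (ι k x) U)) :
    Compat t (ι k x * U) := by
  intro V
  have hmul : unshuffle k M (ι k x * U) = pr x * unshuffle k M U := by
    rw [map_mul, unshuffle_ι]; rfl
  rw [hassoc, map_sub, compat_prim t hone hcounit hbase hleib, hU V, hU' V,
    compat_prim t hone hcounit hbase hleib, ← map₂_assoc t hone hassoc, hmul]

/-- Iterated application of `t (ι x)` for `x` along a list. -/
def aL : List M → TensorAlgebra k M → TensorAlgebra k M
  | [], U => U
  | x :: l, U => aL l (t (ι k x) U)

lemma aL_zero (l : List M) : aL t l 0 = 0 := by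
  induction l with
  | nil => rfl
  | cons x l ih => simp [aL, map_zero, ih]

lemma aL_add (l : List M) (A B : TensorAlgebra k M) :
    aL t l (A + B) = aL t l A + aL t l B := by
  induction l generalizing A B with
  | nil => rfl
  | cons x l ih => simp [aL, map_add, ih]

lemma aL_smul (l : List M) (r : k) (A : TensorAlgebra k M) :
    aL t l (r • A) = r • aL t l A := by
  induction l generalizing A with
  | nil => rfl
  | cons x l ih => simp [aL, map_smul, ih]

lemma compat_aL_mul (hone : ∀ W, t 1 W = W)
    (hcounit : ∀ U, t U 1 = algebraMap k (TensorAlgebra k M) (counit k M U))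
    (hbase : ∀ x y : M, ∃ z, t (ι k x) (ι k y) = ι k z)
    (hleib : ∀ (x : M) (V W : TensorAlgebra k M),
      t (ι k x) (V * W) = t (ι k x) V * W + V * t (ι k x) W)
    (hassoc : ∀ (x : M) (V W : TensorAlgebra k M),
      t (ι k x * V) W = t (ι k x) (t V W) - t (t (ι k x) V) W)
    (l : List M) :
    ∀ (U : TensorAlgebra k M), (∀ l', Compat t (aL t l' U)) →
      ∀ z : M, Compat t (aL t l (ι k z * U)) := by
  induction l with
  | nil =>
    intro U hU z
    exact compat_prim_mul t hone hcounit hbase hleib hassoc z (hU []) (hU [z])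
  | cons y l ih =>
    intro U hU z
    show Compat t (aL t l (t (ι k y) (ι k z * U)))
    obtain ⟨w, hw⟩ := hbase y z
    rw [hleib y (ι k z) U, hw, aL_add]
    exact compat_add t (ih U hU w) (ih (t (ι k y) U) (fun l' => hU (y :: l')) z)

lemma compat_key (hone : ∀ W, t 1 W = W)
    (hcounit : ∀ U, t U 1 = algebraMap k (TensorAlgebra k M) (counit k M U))
    (hbase : ∀ x y : M, ∃ z, t (ι k x) (ι k y) = ι k z)
    (hleib : ∀ (x : M) (V W : TensorAlgebra k M),
      t (ι k x) (V * W) = t (ι k x) V * W + V * t (ι k x) W)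
    (hassoc : ∀ (x : M) (V W : TensorAlgebra k M),
      t (ι k x * V) W = t (ι k x) (t V W) - t (t (ι k x) V) W)
    (a : TensorAlgebra k M) :
    ∀ U : TensorAlgebra k M, (∀ l, Compat t (aL t l U)) →
      ∀ l, Compat t (aL t l (a * U)) := by
  induction a using TensorAlgebra.induction with
  | algebraMap r =>
    intro U hU l
    rw [← Algebra.smul_def, aL_smul]
    exact compat_smul t r (hU l)
  | ι x =>
    intro U hU l
    exact compat_aL_mul t hone hcounit hbase hleib hassoc l U hU x
  | mul a b ha hb =>
    intro U hU l
    rw [mul_assoc]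
    exact ha (b * U) (hb U hU) l
  | add a b ha hb =>
    intro U hU l
    rw [add_mul, aL_add]
    exact compat_add t (ha U hU l) (hb U hU l)

lemma compat_aL_one (hone : ∀ W, t 1 W = W)
    (hcounit : ∀ U, t U 1 = algebraMap k (TensorAlgebra k M) (counit k M U))
    (l : List M) : Compat t (aL t l 1) := by
  cases l with
  | nil => exact compat_one t hone
  | cons x l =>
    show Compat t (aL t l (t (ι k x) 1))
    rw [t_prim_one t hcounit, aL_zero]
    exact compat_zero t

end Aux

/-- In the tensor algebra `T(M)` over a magmatic algebra `(M, m)` with the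
extended product `▷` (denoted `t`), the unshuffle coproduct is compatible with `▷`:
`Δ(U▷V) = (U₍₁₎▷V₍₁₎) ⊗ (U₍₂₎▷V₍₂₎)` for all `U, V ∈ T(M)`, i.e.
`Δ ∘ t = map₂ t t ∘ (Δ ⊗ Δ)` pointwise. -/
theorem unshuffle_compat_triangle {k M : Type*} [CommRing k] [AddCommGroup M] [Module k M]
    (m : M →ₗ[k] M →ₗ[k] M)
    (t : TensorAlgebra k M →ₗ[k] TensorAlgebra k M →ₗ[k] TensorAlgebra k M)
    (hone : ∀ W, t 1 W = W)
    (hcounit : ∀ U, t U 1 = algebraMap k (TensorAlgebra k M) (counit k M U))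
    (hbase : ∀ x y : M, t (ι k x) (ι k y) = ι k (m x y))
    (hleib : ∀ (x : M) (V W : TensorAlgebra k M),
      t (ι k x) (V * W) = t (ι k x) V * W + V * t (ι k x) W)
    (hassoc : ∀ (x : M) (V W : TensorAlgebra k M),
      t (ι k x * V) W = t (ι k x) (t V W) - t (t (ι k x) V) W) :
    ∀ U V : TensorAlgebra k M,
      unshuffle k M (t U V) =
        TensorProduct.map₂ t t (unshuffle k M U) (unshuffle k M V) := by
  intro U V
  have hbase' : ∀ x y : M, ∃ z, t (ι k x) (ι k y) = ι k z :=
    fun x y => ⟨m x y, hbase x y⟩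
  have h : Compat t (aL t [] (U * 1)) :=
    compat_key t hone hcounit hbase' hleib hassoc U 1
      (compat_aL_one t hone hcounit) []
  have h' : Compat t U := by rwa [show aL t [] (U * 1) = U by rw [mul_one]; rfl] at h
  exact h' V
end

section
/- The inverse of Gavrilov's K-map admits the explicit partition formula K⁻¹(y₁⋯yₙ) = Σ_π (y₁⋯yₙ)^π, summing over all set partitions π of {1,…,n}, where for a block B = {b₁<⋯<b_ℓ} one sets y_B := y_{b₁}▷(y_{b₂}▷(⋯▷(y_{b(ℓ−1)}▷y_{b_ℓ})⋯)) and (y₁⋯yₙ)^π := y_{B₁}⋯y_{B_{|π|}} with blocks ordered by increasing maxima. -/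
open TensorProduct TensorAlgebra

variable (k M : Type*) [CommRing k] [AddCommGroup M] [Module k M]

attribute [local instance] Classical.propDecidable

/-- Right-nested magmatic product over a list:
`nest m y [b₁,…,b_ℓ] = y b₁ ▷ (y b₂ ▷ (⋯ ▷ y b_ℓ))` (and `0` on the empty list). -/
def nest {α N : Type*} [Zero N] (m : N → N → N) (y : α → N) : List α → N
  | [] => 0
  | a :: rest => if rest.isEmpty then y a else m (y a) (nest m y rest)

/-- `π` is a set partition of `{0,…,n−1}`: no empty block, and every element lies in a
unique block. -/
def IsSetPartition {n : ℕ} (π : Finset (Finset (Fin n))) : Prop :=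
  ∅ ∉ π ∧ ∀ i : Fin n, ∃! B, B ∈ π ∧ i ∈ B

/-- The factor contributed at position `i` by the partition `π`: if `i` is the maximum
of some block `B` of `π`, this is `ι(y_B)` where `y_B` is the right-nested `▷`-product
of the `y_b`, `b ∈ B`, in increasing order; otherwise it is `1`. Multiplying these
factors in increasing order of `i` realizes the word `y_{B₁}⋯y_{B_{|π|}}` with blocks
ordered by increasing maxima. -/
noncomputable def partFactor {k M : Type*} [CommRing k] [AddCommGroup M] [Module k M]
    (m : M →ₗ[k] M →ₗ[k] M) {n : ℕ} (y : Fin n → M)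
    (π : Finset (Finset (Fin n))) (i : Fin n) : TensorAlgebra k M :=
  if (π.filter fun B => B.max = (i : WithBot (Fin n))) = ∅ then 1
  else ∑ B ∈ π.filter (fun B => B.max = (i : WithBot (Fin n))),
    ι k (nest (fun a b => m a b) y (B.sort (· ≤ ·)))

/-- The monomial `(y₁⋯yₙ)^π = y_{B₁}⋯y_{B_{|π|}}` associated to a set partition `π`,
with blocks ordered by increasing maxima. -/
noncomputable def partTerm {k M : Type*} [CommRing k] [AddCommGroup M] [Module k M]
    (m : M →ₗ[k] M →ₗ[k] M) {n : ℕ} (y : Fin n → M)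
    (π : Finset (Finset (Fin n))) : TensorAlgebra k M :=
  (((List.finRange n).map (partFactor m y π)).prod)

/-!
From `K (y U) = y K(U) − K(y ▷ U)` one gets `K⁻¹(y U) = y K⁻¹(U) + y ▷ K⁻¹(U)`, and we induct
on `n`, peeling off `y₀`. Multiplying the term of a partition `π` of `{1,…,n}` on the left by
`y₀` gives the term of `π` with `{0}` added as a block. The operator `y₀ ▷ ·` is a derivation
sending the letter `y_B` to `y_{{0} ∪ B}`, so it produces the terms of the partitions in which
`0` joins an existing block of `π`. Every partition of `{0,…,n}` arises exactly once in one of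
these two ways.
-/

section Leibniz

variable {A : Type*}

theorem List.prod_map_finRange_succ [Monoid A] {N : ℕ} (f : Fin (N + 1) → A) :
    ((List.finRange (N + 1)).map f).prod =
      f 0 * ((List.finRange N).map fun i => f i.succ).prod := by
  rw [List.finRange_succ, List.map_cons, List.prod_cons, List.map_map]
  rfl

theorem leibniz_prod_map_finRange [Ring A] (D : A → A)
    (hD : ∀ a b, D (a * b) = D a * b + a * D b) {N : ℕ} (f : Fin N → A) :
    D ((List.finRange N).map f).prod =
      ∑ j, ((List.finRange N).map (Function.update f j (D (f j)))).prod := by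
  induction N with
  | zero => simpa using hD 1 1
  | succ N ih =>
    rw [List.prod_map_finRange_succ, hD, ih, Fin.sum_univ_succ, Finset.mul_sum]
    congr 1
    · simp [List.prod_map_finRange_succ]
    · refine Finset.sum_congr rfl fun j _ => ?_
      rw [List.prod_map_finRange_succ, Function.update_of_ne (Fin.succ_ne_zero j).symm]
      congr 3
      funext i
      simp [Function.update_apply]

end Leibniz

section Nest

variable {α β N : Type*} [Zero N] (mul : N → N → N)

theorem nest_cons_of_ne_nil (y : α → N) {a : α} {L : List α} (h : L ≠ []) :
    nest mul y (a :: L) = mul (y a) (nest mul y L) := by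
  simp [nest, h]

theorem nest_map (y : β → N) (g : α → β) : ∀ L : List α, nest mul y (L.map g) = nest mul (y ∘ g) L
  | [] => rfl
  | [_] => rfl
  | a :: b :: L => by
    rw [List.map_cons, nest_cons_of_ne_nil _ _ (by simp), nest_map y g (b :: L),
      nest_cons_of_ne_nil _ _ (List.cons_ne_nil _ _)]
    rfl

end Nest

theorem Finset.max_eq_coe_iff {α : Type*} [LinearOrder α] {s : Finset α} {a : α} :
    s.max = a ↔ a ∈ s ∧ ∀ b ∈ s, b ≤ a :=
  ⟨fun h => ⟨Finset.mem_of_max h, fun _ hb => WithBot.coe_le_coe.mp (h ▸ Finset.le_max hb)⟩,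
    fun ⟨ha, hle⟩ => le_antisymm (Finset.max_le fun b hb => WithBot.coe_le_coe.mpr (hle b hb))
      (Finset.le_max ha)⟩

section Blocks

variable {n : ℕ}

def succBlock (B : Finset (Fin n)) : Finset (Fin (n + 1)) :=
  B.map (Fin.succEmb n)

noncomputable def predBlock (C : Finset (Fin (n + 1))) : Finset (Fin n) :=
  C.preimage Fin.succ (Fin.succ_injective n).injOn

def consBlock (B B' : Finset (Fin n)) : Finset (Fin (n + 1)) :=
  if B' = B then insert 0 (succBlock B') else succBlock B'

@[simp] theorem succ_mem_succBlock {B : Finset (Fin n)} {j : Fin n} :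
    j.succ ∈ succBlock B ↔ j ∈ B := by
  simp [succBlock]

@[simp] theorem zero_notMem_succBlock (B : Finset (Fin n)) : 0 ∉ succBlock B := by
  simp [succBlock, Fin.succ_ne_zero]

@[simp] theorem mem_predBlock {C : Finset (Fin (n + 1))} {j : Fin n} :
    j ∈ predBlock C ↔ j.succ ∈ C := by
  simp [predBlock]

@[simp] theorem succ_mem_consBlock {B B' : Finset (Fin n)} {j : Fin n} :
    j.succ ∈ consBlock B B' ↔ j ∈ B' := by
  unfold consBlock; split_ifs <;> simp [Fin.succ_ne_zero]

@[simp] theorem zero_mem_consBlock {B B' : Finset (Fin n)} : 0 ∈ consBlock B B' ↔ B' = B := by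
  unfold consBlock; split_ifs <;> simp [*]

@[simp] theorem predBlock_consBlock (B B' : Finset (Fin n)) : predBlock (consBlock B B') = B' := by
  ext j; simp

theorem consBlock_predBlock {C : Finset (Fin (n + 1))} {B : Finset (Fin n)}
    (h : 0 ∈ C ↔ predBlock C = B) : consBlock B (predBlock C) = C := by
  ext i; cases i using Fin.cases <;> simp [h]

theorem max_consBlock_eq_zero {B B' : Finset (Fin n)} :
    (consBlock B B').max = (0 : Fin (n + 1)) ↔ B' = B ∧ B' = ∅ := by
  rw [Finset.max_eq_coe_iff]
  simp [Fin.forall_fin_succ, Finset.eq_empty_iff_forall_notMem]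

theorem max_consBlock_eq_succ {B B' : Finset (Fin n)} {i : Fin n} :
    (consBlock B B').max = i.succ ↔ B'.max = i := by
  rw [Finset.max_eq_coe_iff, Finset.max_eq_coe_iff]
  simp [Fin.forall_fin_succ]

theorem sort_succBlock (B : Finset (Fin n)) :
    (succBlock B).sort (· ≤ ·) = (B.sort (· ≤ ·)).map Fin.succ :=
  ((Fin.strictMono_succ).strictMonoOn _).map_finsetSort.symm

theorem sort_consBlock_self (B : Finset (Fin n)) :
    (consBlock B B).sort (· ≤ ·) = 0 :: (B.sort (· ≤ ·)).map Fin.succ := by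
  rw [consBlock, if_pos rfl, Finset.sort_insert _ (fun b _ => Fin.zero_le b)
    (zero_notMem_succBlock B), sort_succBlock]

theorem sort_consBlock_of_ne {B B' : Finset (Fin n)} (h : B' ≠ B) :
    (consBlock B B').sort (· ≤ ·) = (B'.sort (· ≤ ·)).map Fin.succ := by
  rw [consBlock, if_neg h, sort_succBlock]

end Blocks

section Partitions

variable {n : ℕ}

/-- `0` joins the block `B` of `π`; `B = ∅` encodes `0` forming a singleton block. -/
def extendPartition (π : Finset (Finset (Fin n))) (B : Finset (Fin n)) :
    Finset (Finset (Fin (n + 1))) :=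
  (insert B π).image (consBlock B)

noncomputable def restrictPartition (π' : Finset (Finset (Fin (n + 1)))) :
    Finset (Finset (Fin n)) :=
  (π'.image predBlock).erase ∅

namespace IsSetPartition

variable {π : Finset (Finset (Fin n))} {B C : Finset (Fin n)}

theorem eq_of_mem (hπ : IsSetPartition π) (hB : B ∈ π) (hC : C ∈ π) {i : Fin n}
    (hiB : i ∈ B) (hiC : i ∈ C) : B = C :=
  (hπ.2 i).unique ⟨hB, hiB⟩ ⟨hC, hiC⟩

theorem nonempty_of_mem (hπ : IsSetPartition π) (hB : B ∈ π) : B.Nonempty :=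
  Finset.nonempty_iff_ne_empty.mpr fun h => hπ.1 (h ▸ hB)

theorem extendPartition (hπ : IsSetPartition π) (hB : B ∈ insert ∅ π) :
    IsSetPartition (extendPartition π B) := by
  have mem_of_mem_insert : ∀ {B' j}, B' ∈ insert B π → j ∈ B' → B' ∈ π := by
    intro B' j hB' hj
    rcases Finset.mem_insert.mp hB' with rfl | hB'
    · rcases Finset.mem_insert.mp hB with rfl | hB
      · simp at hj
      · exact hB
    · exact hB'
  refine ⟨fun hempty => ?_, fun i => ?_⟩
  · obtain ⟨B', hB', hB'e⟩ := Finset.mem_image.mp hempty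
    by_cases h : B' = B
    · exact Finset.ne_empty_of_mem (zero_mem_consBlock.mpr h) hB'e
    · obtain ⟨j, hj⟩ := hπ.nonempty_of_mem (Finset.mem_of_mem_insert_of_ne hB' h)
      exact Finset.ne_empty_of_mem (succ_mem_consBlock.mpr hj) hB'e
  cases i using Fin.cases with
  | zero =>
    refine ⟨consBlock B B, ⟨Finset.mem_image_of_mem _ (Finset.mem_insert_self _ _), by simp⟩, ?_⟩
    rintro C ⟨hC, h0⟩
    obtain ⟨B', -, rfl⟩ := Finset.mem_image.mp hC
    rw [zero_mem_consBlock.mp h0]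
  | succ j =>
    obtain ⟨B', ⟨hB', hj⟩, huniq⟩ := hπ.2 j
    refine ⟨consBlock B B', ⟨Finset.mem_image_of_mem _ (Finset.mem_insert_of_mem hB'),
      succ_mem_consBlock.mpr hj⟩, ?_⟩
    rintro C ⟨hC, hjC⟩
    obtain ⟨B'', hB'', rfl⟩ := Finset.mem_image.mp hC
    have hjB'' := succ_mem_consBlock.mp hjC
    rw [huniq B'' ⟨mem_of_mem_insert hB'' hjB'', hjB''⟩]

theorem restrictPartition {π' : Finset (Finset (Fin (n + 1)))} (hπ' : IsSetPartition π') :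
    IsSetPartition (restrictPartition π') := by
  refine ⟨Finset.notMem_erase _ _, fun j => ?_⟩
  obtain ⟨C, ⟨hC, hjC⟩, huniq⟩ := hπ'.2 j.succ
  have hjC' : j ∈ predBlock C := mem_predBlock.mpr hjC
  refine ⟨predBlock C, ⟨Finset.mem_erase.mpr ⟨Finset.ne_empty_of_mem hjC',
    Finset.mem_image_of_mem _ hC⟩, hjC'⟩, ?_⟩
  rintro D ⟨hD, hjD⟩
  obtain ⟨C', hC', rfl⟩ := Finset.mem_image.mp (Finset.mem_of_mem_erase hD)
  rw [huniq C' ⟨hC', mem_predBlock.mp hjD⟩]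

end IsSetPartition

theorem restrictPartition_extendPartition {π : Finset (Finset (Fin n))} {B : Finset (Fin n)}
    (hπ : IsSetPartition π) (hB : B ∈ insert ∅ π) :
    restrictPartition (extendPartition π B) = π := by
  simp only [restrictPartition, extendPartition, Finset.image_image, Function.comp_def,
    predBlock_consBlock, Finset.image_id']
  rcases Finset.mem_insert.mp hB with rfl | hB
  · exact Finset.erase_insert hπ.1
  · rw [Finset.insert_eq_of_mem hB, Finset.erase_eq_of_notMem hπ.1]

theorem extendPartition_restrictPartition {π' : Finset (Finset (Fin (n + 1)))}
    (hπ' : IsSetPartition π') {C₀ : Finset (Fin (n + 1))} (hC₀ : C₀ ∈ π') (h0 : 0 ∈ C₀) :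
    extendPartition (restrictPartition π') (predBlock C₀) = π' := by
  have mem_of_predBlock_eq : ∀ C ∈ π', predBlock C = predBlock C₀ → 0 ∈ C := by
    intro C hC hCC₀
    obtain ⟨i, hi⟩ := hπ'.nonempty_of_mem hC
    cases i using Fin.cases with
    | zero => exact hi
    | succ j =>
      have hjC₀ : j.succ ∈ C₀ := mem_predBlock.mp (hCC₀ ▸ mem_predBlock.mpr hi)
      exact hπ'.eq_of_mem hC₀ hC hjC₀ hi ▸ h0
  have hinsert : insert (predBlock C₀) (restrictPartition π') = π'.image predBlock := by
    have hmem := Finset.mem_image_of_mem predBlock hC₀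
    by_cases hB : predBlock C₀ = ∅
    · rw [restrictPartition, hB, Finset.insert_erase (hB ▸ hmem)]
    · have hnot : ∅ ∉ π'.image predBlock := by
        intro hempty
        obtain ⟨C, hC, hCe⟩ := Finset.mem_image.mp hempty
        obtain ⟨i, hi⟩ := hπ'.nonempty_of_mem hC
        cases i using Fin.cases with
        | zero => exact hB (hπ'.eq_of_mem hC hC₀ hi h0 ▸ hCe)
        | succ j => exact Finset.ne_empty_of_mem (mem_predBlock.mpr hi) hCe
      rw [restrictPartition, Finset.erase_eq_of_notMem hnot, Finset.insert_eq_of_mem hmem]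
  rw [extendPartition, hinsert, Finset.image_image]
  refine (Finset.image_congr fun C hC => consBlock_predBlock ⟨fun h0C => ?_, ?_⟩).trans
    Finset.image_id'
  · rw [hπ'.eq_of_mem hC hC₀ h0C h0]
  · exact mem_of_predBlock_eq C hC

theorem filter_isSetPartition_fin_zero :
    Finset.univ.filter (fun π : Finset (Finset (Fin 0)) => IsSetPartition π) = {∅} := by
  ext π
  simp only [Finset.mem_filter, Finset.mem_univ, true_and, Finset.mem_singleton,
    IsSetPartition, IsEmpty.forall_iff, and_true]
  refine ⟨fun h => Finset.eq_empty_of_forall_notMem fun B hB => h ?_,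
    fun h => h ▸ Finset.notMem_empty _⟩
  rwa [Subsingleton.elim B ∅] at hB

theorem extendPartition_inj {π ρ : Finset (Finset (Fin n))} {B C : Finset (Fin n)}
    (hπ : IsSetPartition π) (hB : B ∈ insert ∅ π) (hρ : IsSetPartition ρ) (hC : C ∈ insert ∅ ρ)
    (h : extendPartition π B = extendPartition ρ C) : π = ρ ∧ B = C := by
  refine ⟨by rw [← restrictPartition_extendPartition hπ hB, h,
    restrictPartition_extendPartition hρ hC], ?_⟩
  have hmem : consBlock B B ∈ extendPartition ρ C :=
    h ▸ Finset.mem_image_of_mem _ (Finset.mem_insert_self _ _)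
  obtain ⟨C', -, hC'⟩ := Finset.mem_image.mp hmem
  have hC'C : C' = C := zero_mem_consBlock.mp (hC' ▸ zero_mem_consBlock.mpr rfl)
  simpa [hC'C] using (congrArg predBlock hC').symm

theorem sum_setPartitions_succ {A : Type*} [AddCommMonoid A]
    (f : Finset (Finset (Fin (n + 1))) → A) :
    ∑ π' ∈ Finset.univ.filter (fun π' : Finset (Finset (Fin (n + 1))) => IsSetPartition π'),
        f π' =
      ∑ π ∈ Finset.univ.filter (fun π : Finset (Finset (Fin n)) => IsSetPartition π),
        ∑ B ∈ insert ∅ π, f (extendPartition π B) := by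
  rw [Finset.sum_sigma']
  symm
  refine Finset.sum_nbij (fun p => extendPartition p.1 p.2) ?_ ?_ ?_ fun _ _ => rfl
  · rintro ⟨π, B⟩ hp
    simp only [Finset.mem_sigma, Finset.mem_filter, Finset.mem_univ, true_and] at hp ⊢
    exact hp.1.extendPartition hp.2
  · rintro ⟨π, B⟩ hp ⟨ρ, C⟩ hq h
    simp only [Finset.mem_coe, Finset.mem_sigma, Finset.mem_filter, Finset.mem_univ,
      true_and] at hp hq
    obtain ⟨rfl, rfl⟩ := extendPartition_inj hp.1 hp.2 hq.1 hq.2 h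
    rfl
  · intro π' hπ'
    simp only [Finset.mem_coe, Finset.mem_filter, Finset.mem_univ, true_and] at hπ'
    obtain ⟨C₀, ⟨hC₀, h0⟩, -⟩ := hπ'.2 0
    refine ⟨⟨restrictPartition π', predBlock C₀⟩, ?_,
      extendPartition_restrictPartition hπ' hC₀ h0⟩
    simp only [Finset.mem_coe, Finset.mem_sigma, Finset.mem_filter, Finset.mem_univ,
      true_and]
    refine ⟨hπ'.restrictPartition, ?_⟩
    by_cases hB : predBlock C₀ = ∅
    · simp [hB]
    · exact Finset.mem_insert_of_mem (Finset.mem_erase.mpr ⟨hB, Finset.mem_image_of_mem _ hC₀⟩)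

end Partitions

section PartTerm

variable {k M : Type*} [CommRing k] [AddCommGroup M] [Module k M] (m : M →ₗ[k] M →ₗ[k] M)
  {n : ℕ} {π : Finset (Finset (Fin n))} {B : Finset (Fin n)}

theorem partFactor_eq_one (y : Fin n → M) {i : Fin n} (h : ∀ C ∈ π, C.max ≠ i) :
    partFactor m y π i = 1 := by
  rw [partFactor, if_pos (Finset.filter_eq_empty_iff.mpr h)]

theorem IsSetPartition.filter_max_eq (hπ : IsSetPartition π) (hB : B ∈ π) {i : Fin n}
    (hBi : B.max = i) : π.filter (fun C => C.max = (i : WithBot (Fin n))) = {B} := by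
  ext C
  simp only [Finset.mem_filter, Finset.mem_singleton]
  refine ⟨fun ⟨hC, hCi⟩ => hπ.eq_of_mem hC hB (Finset.mem_of_max hCi) (Finset.mem_of_max hBi),
    by rintro rfl; exact ⟨hB, hBi⟩⟩

theorem IsSetPartition.partFactor_eq (hπ : IsSetPartition π) (y : Fin n → M) (hB : B ∈ π)
    {i : Fin n} (hBi : B.max = i) :
    partFactor m y π i = ι k (nest (fun a b => m a b) y (B.sort (· ≤ ·))) := by
  rw [partFactor, hπ.filter_max_eq hB hBi, if_neg (Finset.singleton_ne_empty B),
    Finset.sum_singleton]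

theorem partFactor_extendPartition_zero (hπ : IsSetPartition π) (hB : B ∈ insert ∅ π)
    (y : Fin (n + 1) → M) :
    partFactor m y (extendPartition π B) 0 = if B = ∅ then ι k (y 0) else 1 := by
  split_ifs with hB0
  · subst hB0
    rw [(hπ.extendPartition hB).partFactor_eq m y
      (Finset.mem_image_of_mem _ (Finset.mem_insert_self _ _))
      (max_consBlock_eq_zero.mpr ⟨rfl, rfl⟩), sort_consBlock_self, Finset.sort_empty]
    rfl
  · refine partFactor_eq_one m y fun C hC => ?_
    obtain ⟨B', -, rfl⟩ := Finset.mem_image.mp hC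
    rw [Ne, max_consBlock_eq_zero]
    rintro ⟨rfl, h⟩
    exact hB0 h

theorem partFactor_extendPartition_succ (hπ : IsSetPartition π) (hB : B ∈ insert ∅ π)
    (y : Fin (n + 1) → M) (i : Fin n) :
    partFactor m y (extendPartition π B) i.succ =
      if B.max = i then ι k (m (y 0) (nest (fun a b => m a b) (y ∘ Fin.succ) (B.sort (· ≤ ·))))
      else partFactor m (y ∘ Fin.succ) π i := by
  have hπ' := hπ.extendPartition hB
  have hmem : ∀ B' ∈ insert B π, consBlock B B' ∈ extendPartition π B :=
    fun B' hB' => Finset.mem_image_of_mem _ hB'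
  split_ifs with hBi
  · have hne : (B.sort (· ≤ ·)).map Fin.succ ≠ [] := by
      simpa [← List.length_eq_zero_iff] using Finset.ne_empty_of_mem (Finset.mem_of_max hBi)
    rw [hπ'.partFactor_eq m y (hmem B (Finset.mem_insert_self _ _))
      (max_consBlock_eq_succ.mpr hBi), sort_consBlock_self, nest_cons_of_ne_nil _ _ hne, nest_map]
  by_cases h : ∃ B' ∈ π, B'.max = i
  · obtain ⟨B', hB', hB'i⟩ := h
    have hB'B : B' ≠ B := by
      rintro rfl
      exact hBi hB'i
    rw [hπ'.partFactor_eq m y (hmem B' (Finset.mem_insert_of_mem hB'))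
      (max_consBlock_eq_succ.mpr hB'i), hπ.partFactor_eq m _ hB' hB'i, sort_consBlock_of_ne hB'B,
      nest_map]
  · push Not at h
    rw [partFactor_eq_one m _ h, partFactor_eq_one]
    intro C hC
    obtain ⟨B', hB', rfl⟩ := Finset.mem_image.mp hC
    rw [Ne, max_consBlock_eq_succ]
    rcases Finset.mem_insert.mp hB' with rfl | hB'
    · exact hBi
    · exact h B' hB'

theorem partTerm_extendPartition_empty (hπ : IsSetPartition π) (y : Fin (n + 1) → M) :
    partTerm m y (extendPartition π ∅) = ι k (y 0) * partTerm m (y ∘ Fin.succ) π := by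
  have h : ∅ ∈ insert ∅ π := Finset.mem_insert_self _ _
  simp only [partTerm, List.prod_map_finRange_succ, partFactor_extendPartition_zero m hπ h,
    partFactor_extendPartition_succ m hπ h, Finset.max_empty, if_pos, WithBot.bot_ne_coe, if_false]

theorem partTerm_extendPartition_of_max_eq (D : TensorAlgebra k M → TensorAlgebra k M)
    (y : Fin (n + 1) → M) (hD : ∀ x, D (ι k x) = ι k (m (y 0) x)) (hπ : IsSetPartition π)
    (hB : B ∈ π) {j : Fin n} (hBj : B.max = j) :
    partTerm m y (extendPartition π B) =
      ((List.finRange n).map (Function.update (partFactor m (y ∘ Fin.succ) π) j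
        (D (partFactor m (y ∘ Fin.succ) π j)))).prod := by
  have hB' : B ∈ insert ∅ π := Finset.mem_insert_of_mem hB
  rw [partTerm, List.prod_map_finRange_succ, partFactor_extendPartition_zero m hπ hB',
    if_neg (hπ.nonempty_of_mem hB).ne_empty, one_mul]
  congr 2
  funext i
  rw [partFactor_extendPartition_succ m hπ hB']
  rcases eq_or_ne i j with rfl | hij
  · rw [Function.update_self, if_pos hBj, hπ.partFactor_eq m _ hB hBj, hD]
  · rw [Function.update_of_ne hij, if_neg (hBj ▸ WithBot.coe_injective.ne hij.symm)]

theorem leibniz_partTerm (D : TensorAlgebra k M → TensorAlgebra k M)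
    (hD_mul : ∀ a b, D (a * b) = D a * b + a * D b)
    (y : Fin (n + 1) → M) (hD : ∀ x, D (ι k x) = ι k (m (y 0) x)) (hπ : IsSetPartition π) :
    D (partTerm m (y ∘ Fin.succ) π) = ∑ B ∈ π, partTerm m y (extendPartition π B) := by
  have hD_one : D 1 = 0 := by simpa using hD_mul 1 1
  rw [partTerm, leibniz_prod_map_finRange D hD_mul]
  calc
    _ = ∑ j : Fin n, ∑ B ∈ π.filter (fun B => B.max = (j : WithBot (Fin n))),
          partTerm m y (extendPartition π B) := by
      refine Finset.sum_congr rfl fun j _ => ?_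
      by_cases h : ∃ B ∈ π, B.max = j
      · obtain ⟨B, hB, hBj⟩ := h
        rw [hπ.filter_max_eq hB hBj, Finset.sum_singleton,
          partTerm_extendPartition_of_max_eq m D y hD hπ hB hBj]
      · push Not at h
        rw [Finset.filter_eq_empty_iff.mpr h, Finset.sum_empty]
        refine List.prod_eq_zero (List.mem_map.mpr ⟨j, List.mem_finRange j, ?_⟩)
        rw [Function.update_self, partFactor_eq_one m _ h, hD_one]
    _ = ∑ B ∈ π, ∑ j ∈ Finset.univ.filter (fun j : Fin n => B.max = j),
          partTerm m y (extendPartition π B) :=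
      Finset.sum_comm' (by simp [and_comm])
    _ = ∑ B ∈ π, partTerm m y (extendPartition π B) := by
      refine Finset.sum_congr rfl fun B hB => ?_
      obtain ⟨j, hj⟩ := Finset.max_of_nonempty (hπ.nonempty_of_mem hB)
      rw [show Finset.univ.filter (fun j : Fin n => B.max = j) = {j} by ext; simp [hj, eq_comm],
        Finset.sum_singleton]

theorem sum_partTerm_succ (D : TensorAlgebra k M → TensorAlgebra k M)
    (hD_mul : ∀ a b, D (a * b) = D a * b + a * D b) (y : Fin (n + 1) → M)
    (hD : ∀ x, D (ι k x) = ι k (m (y 0) x)) :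
    ∑ π' ∈ Finset.univ.filter (fun π' : Finset (Finset (Fin (n + 1))) => IsSetPartition π'),
        partTerm m y π' =
      ∑ π ∈ Finset.univ.filter (fun π : Finset (Finset (Fin n)) => IsSetPartition π),
        (ι k (y 0) * partTerm m (y ∘ Fin.succ) π + D (partTerm m (y ∘ Fin.succ) π)) := by
  rw [sum_setPartitions_succ]
  refine Finset.sum_congr rfl fun π hπ => ?_
  replace hπ : IsSetPartition π := (Finset.mem_filter.mp hπ).2
  rw [Finset.sum_insert hπ.1, partTerm_extendPartition_empty m hπ,
    leibniz_partTerm m D hD_mul y hD hπ]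

end PartTerm

theorem Kinv_partition_formula_general {k M : Type*} [CommRing k] [AddCommGroup M] [Module k M]
    (m : M →ₗ[k] M →ₗ[k] M)
    (t : TensorAlgebra k M →ₗ[k] TensorAlgebra k M →ₗ[k] TensorAlgebra k M)
    (hbase : ∀ x y : M, t (ι k x) (ι k y) = ι k (m x y))
    (hleib : ∀ (x : M) (V W : TensorAlgebra k M),
      t (ι k x) (V * W) = t (ι k x) V * W + V * t (ι k x) W)
    (K Kinv : TensorAlgebra k M →ₗ[k] TensorAlgebra k M)
    (hK1 : K 1 = 1)
    (hKrec : ∀ (y : M) (U : TensorAlgebra k M),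
      K (ι k y * U) = ι k y * K U - K (t (ι k y) U))
    (hKinv₁ : ∀ U, Kinv (K U) = U) (hKinv₂ : ∀ U, K (Kinv U) = U) :
    ∀ (n : ℕ) (y : Fin n → M),
      Kinv (((List.finRange n).map (fun i => ι k (y i))).prod) =
        ∑ π ∈ Finset.univ.filter (fun π : Finset (Finset (Fin n)) => IsSetPartition π),
          partTerm m y π := by
  have hKinv_mul : ∀ (x : M) (U : TensorAlgebra k M),
      Kinv (ι k x * U) = ι k x * Kinv U + t (ι k x) (Kinv U) := by
    intro x U
    obtain ⟨V, rfl⟩ : ∃ V, K V = U := ⟨Kinv U, hKinv₂ U⟩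
    rw [hKinv₁, ← hKinv₁ (ι k x * V + t (ι k x) V), map_add, hKrec, sub_add_cancel]
  intro n
  induction n with
  | zero =>
    intro y
    rw [filter_isSetPartition_fin_zero, Finset.sum_singleton]
    show Kinv 1 = 1
    simpa [hK1] using hKinv₁ 1
  | succ n ih =>
    intro y
    have hword : ((List.finRange (n + 1)).map fun i => ι k (y i)).prod =
        ι k (y 0) * ((List.finRange n).map fun i => ι k ((y ∘ Fin.succ) i)).prod :=
      List.prod_map_finRange_succ _
    rw [hword, hKinv_mul, ih, sum_partTerm_succ m (t (ι k (y 0))) (hleib (y 0)) y (hbase (y 0)),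
      Finset.sum_add_distrib, Finset.mul_sum, map_sum]

/-- The inverse of Gavrilov's K-map admits the explicit partition
formula `K⁻¹(y₁⋯yₙ) = Σ_π (y₁⋯yₙ)^π`, summing over all set partitions `π` of
`{1,…,n}`. -/
theorem Kinv_partition_formula {k M : Type*} [CommRing k] [AddCommGroup M] [Module k M]
    (m : M →ₗ[k] M →ₗ[k] M)
    (t : TensorAlgebra k M →ₗ[k] TensorAlgebra k M →ₗ[k] TensorAlgebra k M)
    (hone : ∀ W, t 1 W = W)
    (hcounit : ∀ U, t U 1 = algebraMap k (TensorAlgebra k M) (counit k M U))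
    (hbase : ∀ x y : M, t (ι k x) (ι k y) = ι k (m x y))
    (hleib : ∀ (x : M) (V W : TensorAlgebra k M),
      t (ι k x) (V * W) = t (ι k x) V * W + V * t (ι k x) W)
    (hassoc : ∀ (x : M) (V W : TensorAlgebra k M),
      t (ι k x * V) W = t (ι k x) (t V W) - t (t (ι k x) V) W)
    (K Kinv : TensorAlgebra k M →ₗ[k] TensorAlgebra k M)
    (hK1 : K 1 = 1)
    (hKι : ∀ y : M, K (ι k y) = ι k y)
    (hKrec : ∀ (y : M) (U : TensorAlgebra k M),
      K (ι k y * U) = ι k y * K U - K (t (ι k y) U))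
    (hKinv₁ : ∀ U, Kinv (K U) = U) (hKinv₂ : ∀ U, K (Kinv U) = U) :
    ∀ (n : ℕ) (y : Fin n → M),
      Kinv (((List.finRange n).map (fun i => ι k (y i))).prod) =
        ∑ π ∈ Finset.univ.filter (fun π : Finset (Finset (Fin n)) => IsSetPartition π),
          partTerm m y π :=
  Kinv_partition_formula_general m t hbase hleib K Kinv hK1 hKrec hKinv₁ hKinv₂
end

section
/- Let M be the space of vector fields on a smooth manifold with an affine connection ∇ that is flat (R = 0) and has parallel torsion (∇t = 0). Then (XM, −t(.,.), ▷) with X▷Y := ∇_X Y is a post-Lie algebra: −t(.,.) satisfies the Jacobi identity, X ▷ (−t(Y,Z)) = −t(X▷Y, Z) − t(Y, X▷Z), and −t(X,Y) ▷ Z = a_▷(X,Y,Z) − a_▷(Y,X,Z). -/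
/-- Let `V` be the space of vector fields on a smooth manifold with an
affine connection, i.e. a Lie algebra over `ℝ` (with the Jacobi bracket `⁅·,·⁆`)
equipped with a bilinear product `X ▷ Y := ∇_X Y` (denoted `t`). Define the torsion
`tor(X,Y) = X▷Y − Y▷X − ⁅X,Y⁆` and the curvature
`R(X,Y)Z = X▷(Y▷Z) − Y▷(X▷Z) − ⁅X,Y⁆▷Z`. If the connection is flat (`R = 0`) and has
parallel torsion (`∇tor = 0`), then `(V, −tor, ▷)` is a post-Lie algebra: `−tor` is
antisymmetric and satisfies the Jacobi identity, and both post-Lie axioms hold. -/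
theorem flat_parallelTorsion_postLie {V : Type*} [LieRing V] [LieAlgebra ℝ V]
    (t : V →ₗ[ℝ] V →ₗ[ℝ] V)
    (tor : V → V → V)
    (htor : ∀ X Y, tor X Y = t X Y - t Y X - ⁅X, Y⁆)
    -- flatness: R = 0
    (hflat : ∀ X Y Z : V, t X (t Y Z) - t Y (t X Z) - t ⁅X, Y⁆ Z = 0)
    -- parallel torsion: (∇_X tor)(Y,Z) = 0
    (hpar : ∀ X Y Z : V, t X (tor Y Z) - tor (t X Y) Z - tor Y (t X Z) = 0) :
    -- −tor is antisymmetric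
    (∀ X Y : V, -tor X Y = -(-tor Y X)) ∧
    -- −tor satisfies the Jacobi identity
    (∀ X Y Z : V,
      -tor X (-tor Y Z) + -tor Y (-tor Z X) + -tor Z (-tor X Y) = 0) ∧
    -- first post-Lie axiom: X ▷ (−tor(Y,Z)) = −tor(X▷Y, Z) + (−tor(Y, X▷Z))
    (∀ X Y Z : V, t X (-tor Y Z) = -tor (t X Y) Z + -tor Y (t X Z)) ∧
    -- second post-Lie axiom: (−tor(X,Y)) ▷ Z = a_▷(X,Y,Z) − a_▷(Y,X,Z)
    (∀ X Y Z : V,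
      t (-tor X Y) Z = (t X (t Y Z) - t (t X Y) Z) - (t Y (t X Z) - t (t Y X) Z)) := by
  have h2 : ∀ X Y Z : V, t ⁅X, Y⁆ Z = t X (t Y Z) - t Y (t X Z) := by
    intro X Y Z
    have h := hflat X Y Z
    rw [sub_sub, sub_eq_zero] at h
    rw [h]; abel
  refine ⟨?_, ?_, ?_, ?_⟩
  · intro X Y
    simp only [htor, neg_neg, neg_sub, ← lie_skew X Y]
    abel
  · intro X Y Z
    have hp1 := hpar X Y Z
    have hp2 := hpar Y Z X
    have hp3 := hpar Z X Y
    have hj : ⁅X, ⁅Y, Z⁆⁆ + ⁅Y, ⁅Z, X⁆⁆ + ⁅Z, ⁅X, Y⁆⁆ = 0 := by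
      have a : ⁅Z, ⁅X, Y⁆⁆ = -⁅⁅X, Y⁆, Z⁆ := (lie_skew _ _).symm
      have b : ⁅Y, ⁅Z, X⁆⁆ = -⁅Y, ⁅X, Z⁆⁆ := by
        rw [show ⁅Z, X⁆ = -⁅X, Z⁆ from (lie_skew _ _).symm, lie_neg]
      rw [a, b, lie_lie]
      abel
    simp only [htor, map_sub, map_neg, LinearMap.sub_apply, LinearMap.neg_apply,
      lie_sub, sub_lie, lie_neg, neg_lie, h2] at hp1 hp2 hp3 ⊢
    linear_combination (norm := abel) hp1 + hp2 + hp3 + hj +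
      lie_skew ((t Y) Z) X + lie_skew ((t Z) X) Y + lie_skew ((t X) Y) Z
  · intro X Y Z
    have hp := hpar X Y Z
    simp only [htor, map_sub, map_neg, LinearMap.sub_apply, LinearMap.neg_apply,
      lie_sub, sub_lie, lie_neg, neg_lie, h2] at hp ⊢
    linear_combination (norm := abel) -hp
  · intro X Y Z
    simp only [htor, map_sub, map_neg, LinearMap.sub_apply, LinearMap.neg_apply, h2]
    abel
end

section
/- Let g be the post-Lie algebra of free Lie elements over the vector fields on a manifold with affine connection, acting on vector fields via ▷. For any u ∈ g and vector fields b, c, d, the covariant derivative of the curvature tensor satisfies (u ▷ r(b,c))(d) = ⟦u, s(b,c)⟧ ▷ d, where s(b,c) = [b,c] + t(b,c) is the curvature element and ⟦.,.⟧ is the Grossman–Larson bracket. -/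
/-- Let `g` be the post-Lie algebra of free Lie elements over the vector
fields on a manifold with an affine connection: a post-Lie algebra `(L, ⁅·,·⁆, ▷)`
(product `▷` denoted `t`) carrying in addition the framed (Jacobi) Lie bracket `J`.
With curvature `r(b,c)(d) := b▷(c▷d) − c▷(b▷d) − J(b,c)▷d`, torsion
`tor(b,c) := b▷c − c▷b − J(b,c)`, curvature element `s(b,c) := ⁅b,c⁆ + tor(b,c)`, and
Grossman–Larson bracket `⟦u,v⟧ := u▷v − v▷u + ⁅u,v⁆`, the covariant derivative of the
curvature tensor — defined via the Leibniz rule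
`(u ▷ r(b,c))(d) := u▷(r(b,c)(d)) − r(b,c)(u▷d)` — satisfies
`(u ▷ r(b,c))(d) = ⟦u, s(b,c)⟧ ▷ d`. -/
theorem covariant_derivative_curvature {k L : Type*} [CommRing k] [LieRing L]
    [LieAlgebra k L] (P : PostLie k L)
    (J : L →ₗ[k] L →ₗ[k] L)
    (hJanti : ∀ a b : L, J a b = -J b a)
    (hJjacobi : ∀ a b c : L, J a (J b c) + J b (J c a) + J c (J a b) = 0)
    (r : L → L → L → L) (tor s dbr : L → L → L)
    (hr : ∀ b c d, r b c d = P.t b (P.t c d) - P.t c (P.t b d) - P.t (J b c) d)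
    (htor : ∀ b c, tor b c = P.t b c - P.t c b - J b c)
    (hs : ∀ b c, s b c = ⁅b, c⁆ + tor b c)
    (hdbr : ∀ u v, dbr u v = P.t u v - P.t v u + ⁅u, v⁆) :
    ∀ (u b c d : L),
      P.t u (r b c d) - r b c (P.t u d) = P.t (dbr u (s b c)) d := by
  intro u b c d
  have key : ∀ d : L, r b c d = P.t (s b c) d := by
    intro d
    rw [hr, hs, htor]
    simp only [map_add, map_sub, LinearMap.add_apply, LinearMap.sub_apply, P.ax2]
    abel
  rw [key, key, hdbr]
  simp only [map_add, map_sub, LinearMap.add_apply, LinearMap.sub_apply, P.ax2]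
  abel
end
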